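/- arXiv:1802.07178 — 7 statements merged into one kernel-verified Lean document; each statement's English description precedes it below -/
import Mathlib

section
/- Let m = p₁^{e₁} ⋯ p_k^{e_k} with p₁ < ⋯ < p_k primes and all eᵢ ≥ 1. Fix an index i ≤ k and a prime p with gcd(m, p) = 1, and let m̃ = m·p^{eᵢ}/pᵢ^{eᵢ} be the number obtained by replacing pᵢ^{eᵢ} by p^{eᵢ} in the factorization of m. Then: (1) if m is abundant or perfect and p < pᵢ, then m̃ is abundant; (2) if m is deficient or perfect and p > pᵢ, then m̃ is deficient. -/
/-- The sum of all divisors of `n`. -/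
def sigma1 (n : ℕ) : ℕ := ∑ d ∈ n.divisors, d

lemma sigma1_mul {a b : ℕ} (h : a.Coprime b) : sigma1 (a * b) = sigma1 a * sigma1 b :=
  h.sum_divisors_mul

lemma sigma1_pos {n : ℕ} (hn : 0 < n) : 0 < sigma1 n :=
  Finset.sum_pos (fun d hd => Nat.pos_of_mem_divisors hd)
    ⟨1, Nat.one_mem_divisors.mpr hn.ne'⟩

lemma sigma1_prime_pow {a : ℕ} (ha : a.Prime) (n : ℕ) :
    sigma1 (a ^ n) = ∑ j ∈ Finset.range (n + 1), a ^ j := by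
  simp [sigma1, Nat.sum_divisors_prime_pow ha]

/-- Key ratio inequality: for `a < b` and `e ≥ 1`,
`σ(a^e)/a^e > σ(b^e)/b^e`, i.e. `σ(a^e) * b^e > σ(b^e) * a^e`. -/
lemma key {a b e : ℕ} (ha : 1 ≤ a) (hab : a < b) (he : 1 ≤ e) :
    (∑ j ∈ Finset.range (e + 1), b ^ j) * a ^ e <
      (∑ j ∈ Finset.range (e + 1), a ^ j) * b ^ e := by
  rw [Finset.sum_mul, Finset.sum_mul]
  apply Finset.sum_lt_sum
  · intro j hj
    rw [Finset.mem_range] at hj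
    have hj' : j ≤ e := Nat.lt_succ_iff.mp hj
    calc b ^ j * a ^ e = (a ^ j * b ^ j) * a ^ (e - j) := by
          conv_lhs => rw [show e = j + (e - j) by omega]
          ring
      _ ≤ (a ^ j * b ^ j) * b ^ (e - j) := by
          exact Nat.mul_le_mul_left _ (Nat.pow_le_pow_left hab.le _)
      _ = a ^ j * b ^ e := by
          conv_rhs => rw [show e = j + (e - j) by omega]
          ring
  · refine ⟨0, Finset.mem_range.mpr (by omega), ?_⟩
    simp only [pow_zero, one_mul]
    exact Nat.pow_lt_pow_left hab (by omega)

/-- Let `m = p₁^{e₁} ⋯ p_k^{e_k}` with `p₁ < ⋯ < p_k` primes and all `eᵢ ≥ 1`.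
Fix `i ≤ k` and a prime `q` coprime with `m`, and let `mt = m·q^{eᵢ}/pᵢ^{eᵢ}`.
(1) If `m` is abundant or perfect and `q < pᵢ`, then `mt` is abundant.
(2) If `m` is deficient or perfect and `q > pᵢ`, then `mt` is deficient. -/
theorem stmt2 (k : ℕ) (p e : Fin k → ℕ)
    (hp : ∀ i, (p i).Prime) (hmono : StrictMono p) (he : ∀ i, 1 ≤ e i)
    (m : ℕ) (hm : m = ∏ i, p i ^ e i)
    (i : Fin k) (q : ℕ) (hq : q.Prime) (hcop : Nat.Coprime m q)
    (mt : ℕ) (hmt : mt = m / p i ^ e i * q ^ e i) :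
    (2 * m ≤ sigma1 m → q < p i → 2 * mt < sigma1 mt) ∧
    (sigma1 m ≤ 2 * m → p i < q → sigma1 mt < 2 * mt) := by
  set M : ℕ := ∏ j ∈ Finset.univ.erase i, p j ^ e j with hM
  have hmMP : m = p i ^ e i * M := by
    rw [hm, hM, ← Finset.mul_prod_erase _ _ (Finset.mem_univ i)]
  -- coprimality of M with p i
  have hMcop : Nat.Coprime M (p i) := by
    apply Nat.Coprime.prod_left
    intro j hj
    have hji : j ≠ i := (Finset.mem_erase.mp hj).1
    exact (Nat.Coprime.pow_left _ ((Nat.coprime_primes (hp j) (hp i)).mpr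
      (fun h => hji (hmono.injective h))))
  have hMdvd : M ∣ m := ⟨p i ^ e i, by rw [hmMP, mul_comm]⟩
  have hMq : Nat.Coprime M (q ^ e i) :=
    ((Nat.Coprime.coprime_dvd_left hMdvd hcop)).pow_right _
  have hMP : Nat.Coprime (p i ^ e i) M := ((hMcop.pow_right _).symm)
  have hdiv : m / p i ^ e i = M := by
    rw [hmMP, Nat.mul_div_cancel_left _ (pow_pos (hp i).pos _)]
  have hmtMQ : mt = M * q ^ e i := by rw [hmt, hdiv]
  have hσm : sigma1 m = sigma1 (p i ^ e i) * sigma1 M := by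
    rw [hmMP, sigma1_mul hMP]
  have hσmt : sigma1 mt = sigma1 M * sigma1 (q ^ e i) := by
    rw [hmtMQ, sigma1_mul hMq]
  set P := p i ^ e i
  set Q := q ^ e i
  have hPpos : 0 < P := pow_pos (hp i).pos _
  have hQpos : 0 < Q := pow_pos hq.pos _
  have hσPpos : 0 < sigma1 P := by
    rw [sigma1_prime_pow (hp i)]
    exact Finset.sum_pos (fun j _ => pow_pos (hp i).pos _) (by simp)
  have hσQpos : 0 < sigma1 Q := by
    rw [sigma1_prime_pow hq]
    exact Finset.sum_pos (fun j _ => pow_pos hq.pos _) (by simp)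
  have hMpos : 0 < M := Finset.prod_pos (fun j _ => pow_pos (hp j).pos _)
  constructor
  · intro habun hlt
    -- q < p i : σ(Q) * P > σ(P) * Q
    have hkey : sigma1 P * Q < sigma1 Q * P := by
      rw [sigma1_prime_pow (hp i), sigma1_prime_pow hq]
      exact key hq.one_lt.le hlt (he i)
    have h1 : 2 * mt * sigma1 P < sigma1 m * sigma1 Q := by
      calc 2 * mt * sigma1 P = 2 * M * (sigma1 P * Q) := by
            rw [hmtMQ]; ring
        _ < 2 * M * (sigma1 Q * P) :=
            Nat.mul_lt_mul_of_pos_left hkey (by positivity)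
        _ = 2 * m * sigma1 Q := by rw [hmMP]; ring
        _ ≤ sigma1 m * sigma1 Q := Nat.mul_le_mul_right _ habun
    rw [hσm, hσmt] at *
    -- h1 : 2 * mt * σP < σP * σM * σQ
    have h2 : 2 * mt * sigma1 P < sigma1 M * sigma1 Q * sigma1 P := by
      calc 2 * mt * sigma1 P < sigma1 P * sigma1 M * sigma1 Q := h1
        _ = sigma1 M * sigma1 Q * sigma1 P := by ring
    exact Nat.lt_of_mul_lt_mul_right h2
  · intro hdef hlt
    have hkey : sigma1 Q * P < sigma1 P * Q := by
      rw [sigma1_prime_pow (hp i), sigma1_prime_pow hq]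
      exact key (hp i).one_lt.le hlt (he i)
    have h1 : sigma1 mt * P < 2 * mt * P := by
      calc sigma1 mt * P = sigma1 M * (sigma1 Q * P) := by
            rw [hσmt]; ring
        _ < sigma1 M * (sigma1 P * Q) :=
            Nat.mul_lt_mul_of_pos_left hkey (sigma1_pos hMpos)
        _ = sigma1 m * Q := by rw [hσm]; ring
        _ ≤ 2 * m * Q := Nat.mul_le_mul_right _ hdef
        _ = 2 * mt * P := by rw [hmMP, hmtMQ]; ring
    exact Nat.lt_of_mul_lt_mul_right h1
end

section
/- Let m be a deficient natural number, e ≥ 1 a natural number, and p a prime with gcd(m, p) = 1. Then: (1) if p^e/σ(p^{e−1}) < σ(m)/d(m) (as rationals) then m·p^e is abundant; (2) if p^e/σ(p^{e−1}) = σ(m)/d(m) then m·p^e is perfect; (3) if p^e/σ(p^{e−1}) > σ(m)/d(m) then m·p^e is deficient. -/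
lemma sigma1_prime_pow_s3 {p : ℕ} (hp : p.Prime) (i : ℕ) :
    sigma1 (p ^ i) = ∑ k ∈ Finset.range (i + 1), p ^ k := by
  rw [sigma1, ← ArithmeticFunction.sigma_one_apply,
    ArithmeticFunction.sigma_one_apply_prime_pow hp]

/-- Let `m` be deficient, `e ≥ 1`, and `p` a prime coprime with `m`. Comparing
`p^e/σ(p^{e-1})` with `σ(m)/d(m)` (as rationals) decides whether `m·p^e` is
abundant, perfect or deficient. -/
theorem stmt3 (m e p : ℕ) (hm : 1 ≤ m) (hdef : sigma1 m < 2 * m)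
    (he : 1 ≤ e) (hp : p.Prime) (hcop : Nat.Coprime m p) :
    ((p : ℚ) ^ e / (sigma1 (p ^ (e - 1)) : ℚ)
        < (sigma1 m : ℚ) / (2 * (m : ℚ) - (sigma1 m : ℚ)) →
      2 * (m * p ^ e) < sigma1 (m * p ^ e)) ∧
    ((p : ℚ) ^ e / (sigma1 (p ^ (e - 1)) : ℚ)
        = (sigma1 m : ℚ) / (2 * (m : ℚ) - (sigma1 m : ℚ)) →
      sigma1 (m * p ^ e) = 2 * (m * p ^ e)) ∧
    ((p : ℚ) ^ e / (sigma1 (p ^ (e - 1)) : ℚ)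
        > (sigma1 m : ℚ) / (2 * (m : ℚ) - (sigma1 m : ℚ)) →
      sigma1 (m * p ^ e) < 2 * (m * p ^ e)) := by
  have hSpos : 0 < sigma1 (p ^ (e - 1)) := sigma1_pos (pow_pos hp.pos _)
  have hSQ : (0 : ℚ) < (sigma1 (p ^ (e - 1)) : ℚ) := by exact_mod_cast hSpos
  have hdQ : (0 : ℚ) < 2 * (m : ℚ) - (sigma1 m : ℚ) := by
    have : (sigma1 m : ℚ) < 2 * m := by exact_mod_cast hdef
    linarith
  -- multiplicativity
  have hmul : sigma1 (m * p ^ e) = sigma1 m * sigma1 (p ^ e) :=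
    Nat.Coprime.sum_divisors_mul (hcop.pow_right e)
  -- sigma of prime power splits
  have hsplit : sigma1 (p ^ e) = p ^ e + sigma1 (p ^ (e - 1)) := by
    rw [sigma1_prime_pow_s3 hp, sigma1_prime_pow_s3 hp]
    obtain ⟨e', rfl⟩ : ∃ e', e = e' + 1 := ⟨e - 1, (Nat.succ_pred_eq_of_pos he).symm⟩
    rw [Finset.sum_range_succ]
    simp [Nat.add_comm]
  set S : ℕ := sigma1 (p ^ (e - 1))
  set s : ℕ := sigma1 m
  have hkey : sigma1 (m * p ^ e) = s * (p ^ e + S) := by rw [hmul, hsplit]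
  refine ⟨?_, ?_, ?_⟩
  · intro h
    rw [div_lt_div_iff₀ hSQ hdQ] at h
    have : 2 * ((m : ℚ) * p ^ e) < s * (p ^ e + S) := by push_cast at h ⊢; nlinarith
    have hN : 2 * (m * p ^ e) < s * (p ^ e + S) := by exact_mod_cast this
    omega
  · intro h
    rw [div_eq_div_iff hSQ.ne' hdQ.ne'] at h
    have : (s : ℚ) * (p ^ e + S) = 2 * ((m : ℚ) * p ^ e) := by push_cast at h ⊢; nlinarith
    have hN : s * (p ^ e + S) = 2 * (m * p ^ e) := by exact_mod_cast this
    omega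
  · intro h
    rw [gt_iff_lt, div_lt_div_iff₀ hdQ hSQ] at h
    have : (s : ℚ) * (p ^ e + S) < 2 * ((m : ℚ) * p ^ e) := by push_cast at h ⊢; nlinarith
    have hN : s * (p ^ e + S) < 2 * (m * p ^ e) := by exact_mod_cast this
    omega
end

section
/- For every prime p, the sequence e ↦ c(p^e) = σ(p^e)/d(p^e) is strictly increasing in e ≥ 1; moreover, for every odd prime p, c(p^e) converges to p/(p−2) as e → ∞. -/
/-- The center of a deficient number `m`: `c(m) = σ(m)/d(m)` where `d(m) = 2m - σ(m)`. -/
def center (n : ℕ) : ℚ := (sigma1 n : ℚ) / (2 * (n : ℚ) - (sigma1 n : ℚ))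

/-!
Since `(p - 1) σ(p^e) = p^(e+1) - 1`, dividing numerator and denominator of `c(p^e)` by
`p^e / (p - 1)` gives `c(p^e) = (p - t) / (p - 2 + t)` with `t = p⁻¹ ^ e`. This is a strictly
decreasing function of `t > 0`, and `t` decreases strictly to `0`, whence both claims.
-/

open Filter Topology

lemma sub_div_sub_two_add_lt {K : Type*} [Field K] [LinearOrder K] [IsStrictOrderedRing K]
    {a s t : K} (ha : 1 < a) (hs : 0 < a - 2 + s) (hst : s < t) :
    (a - t) / (a - 2 + t) < (a - s) / (a - 2 + s) := by
  rw [div_lt_div_iff₀ (by linarith) hs]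
  nlinarith [mul_pos (sub_pos.2 hst) (sub_pos.2 ha)]

lemma Filter.Tendsto.sub_div_sub_two_add {K α : Type*} [Field K] [TopologicalSpace K]
    [IsTopologicalDivisionRing K] {l : Filter α} {t : α → K} (ht : Tendsto t l (𝓝 0)) {a : K}
    (ha : a ≠ 2) : Tendsto (fun x => (a - t x) / (a - 2 + t x)) l (𝓝 (a / (a - 2))) := by
  simpa only [sub_zero, add_zero, Pi.div_def] using
    (tendsto_const_nhds.sub ht).div (tendsto_const_nhds.add ht) (by simpa [sub_eq_zero] using ha)

namespace Nat.Prime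

variable {p : ℕ}

lemma sigma1_pow_mul_sub_one (hp : p.Prime) (e : ℕ) :
    (sigma1 (p ^ e) : ℚ) * (p - 1) = p ^ (e + 1) - 1 := by
  rw [sigma1, Nat.sum_divisors_prime_pow hp]
  push_cast
  exact geom_sum_mul _ _

lemma center_pow (hp : p.Prime) (e : ℕ) :
    center (p ^ e) = (p - (p : ℚ)⁻¹ ^ e) / (p - 2 + (p : ℚ)⁻¹ ^ e) := by
  have hp1 : (1 : ℚ) < p := by exact_mod_cast hp.one_lt
  have hx : (p : ℚ) ^ e ≠ 0 := (pow_pos (zero_lt_one.trans hp1) e).ne'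
  have hσ := hp.sigma1_pow_mul_sub_one e
  rw [center, ← mul_div_mul_right _ _ (sub_pos.2 hp1).ne', inv_pow,
    ← mul_div_mul_right (_ - _) _ hx]
  push_cast
  congr 1 <;> field_simp
  · linear_combination hσ
  · linear_combination -hσ

end Nat.Prime

/-- For every prime `p`, the sequence `e ↦ c(p^e)` is strictly increasing in `e ≥ 1`;
moreover, for every odd prime `p`, `c(p^e)` converges to `p/(p-2)` as `e → ∞`. -/
theorem stmt4 (p : ℕ) (hp : p.Prime) :
    (∀ e : ℕ, 1 ≤ e → center (p ^ e) < center (p ^ (e + 1))) ∧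
    (Odd p → Filter.Tendsto (fun e : ℕ => center (p ^ e)) Filter.atTop
      (nhds ((p : ℚ) / ((p : ℚ) - 2)))) := by
  have hp2 : (2 : ℚ) ≤ p := by exact_mod_cast hp.two_le
  have hr0 : (0 : ℚ) < (p : ℚ)⁻¹ := by positivity
  have hr1 : (p : ℚ)⁻¹ < 1 := inv_lt_one_of_one_lt₀ (by linarith)
  refine ⟨fun e _ => ?_, fun hodd => ?_⟩
  · rw [hp.center_pow, hp.center_pow]
    exact sub_div_sub_two_add_lt (by linarith) (by positivity)
      (pow_lt_pow_right_of_lt_one₀ hr0 hr1 e.lt_succ_self)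
  · simpa only [hp.center_pow] using
      (tendsto_pow_atTop_nhds_zero_of_lt_one hr0.le hr1).sub_div_sub_two_add
        (by exact_mod_cast hodd.ne_two_of_dvd_nat dvd_rfl)
end

section
/- Let m be a deficient natural number and let p, q be primes with gcd(m, p) = gcd(m, q) = 1 and q > p > c(m) (as rationals, i.e., p·d(m) > σ(m)). Then m·p and m·q are deficient and c(m·q) < c(m·p). -/
lemma sigma1_mul_s5 {m n : ℕ} (h : Nat.Coprime m n) :
    sigma1 (m * n) = sigma1 m * sigma1 n := Nat.Coprime.sum_divisors_mul h

lemma sigma1_prime {p : ℕ} (hp : p.Prime) : sigma1 p = p + 1 := by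
  simp [sigma1, hp.divisors, Finset.sum_pair hp.ne_one.symm, Nat.add_comm]

/-- If `m` is deficient and `p, q` are primes coprime with `m` with `q > p > c(m)`,
then `m·p` and `m·q` are deficient and `c(m·q) < c(m·p)`. -/
theorem stmt5 (m p q : ℕ) (hm : 1 ≤ m) (hdef : sigma1 m < 2 * m)
    (hp : p.Prime) (hq : q.Prime)
    (hcp : Nat.Coprime m p) (hcq : Nat.Coprime m q)
    (hqp : p < q) (hpc : center m < (p : ℚ)) :
    sigma1 (m * p) < 2 * (m * p) ∧ sigma1 (m * q) < 2 * (m * q) ∧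
      center (m * q) < center (m * p) := by
  have hsp := sigma1_mul_s5 hcp
  have hsq := sigma1_mul_s5 hcq
  rw [sigma1_prime hp] at hsp
  rw [sigma1_prime hq] at hsq
  -- work over ℚ
  set S : ℚ := (sigma1 m : ℚ) with hS
  have hS1 : 1 ≤ S := by
    have h1 : 0 < sigma1 m := by
      have hmem : m ∈ m.divisors := Nat.mem_divisors_self m (by omega)
      exact Finset.sum_pos' (fun i _ => Nat.zero_le i) ⟨m, hmem, by omega⟩
    rw [hS]; exact_mod_cast h1
  have hD : (0:ℚ) < 2 * m - S := by
    have : (sigma1 m : ℚ) < 2 * m := by exact_mod_cast hdef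
    linarith
  have hpcS : S < p * (2 * m - S) := by
    have := hpc
    rw [center, div_lt_iff₀ hD] at this
    linarith [this]
  have hpq : (p : ℚ) < q := by exact_mod_cast hqp
  have hqcS : S < q * (2 * m - S) := by nlinarith
  -- deficiency in ℕ
  have defp : sigma1 (m * p) < 2 * (m * p) := by
    have : (sigma1 (m * p) : ℚ) < 2 * (m * p) := by
      rw [hsp]; push_cast; nlinarith
    exact_mod_cast this
  have defq : sigma1 (m * q) < 2 * (m * q) := by
    have : (sigma1 (m * q) : ℚ) < 2 * (m * q) := by
      rw [hsq]; push_cast; nlinarith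
    exact_mod_cast this
  refine ⟨defp, defq, ?_⟩
  rw [center, center, hsp, hsq]
  push_cast
  have hDp : (0:ℚ) < 2 * (m * p) - S * (p + 1) := by nlinarith
  have hDq : (0:ℚ) < 2 * (m * q) - S * (q + 1) := by nlinarith
  rw [div_lt_div_iff₀ hDq hDp]
  have hm' : (0:ℚ) < m := by exact_mod_cast hm
  nlinarith [mul_pos hm' (lt_of_lt_of_le zero_lt_one hS1), hpq]
end

section
/- Let p₁ < ⋯ < p_k be primes such that m = p₁·p₂ ⋯ p_k is deficient, and let p > p_k be a prime such that m·p is abundant. Then m·p is primitive abundant. -/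
def Abundant (n : ℕ) : Prop := 2 * n < sigma1 n

def Deficient (n : ℕ) : Prop := sigma1 n < 2 * n

def PrimitiveAbundant (n : ℕ) : Prop :=
  Abundant n ∧ ∀ d ∈ n.properDivisors, Deficient d

lemma deficient_iff_abundancyIndex_lt_two {n : ℕ} (hn : n ≠ 0) :
    Deficient n ↔ n.abundancyIndex < 2 := by
  rw [Nat.abundancyIndex, div_lt_iff₀ (by positivity)]
  exact_mod_cast Iff.rfl

lemma Deficient.ne_zero {n : ℕ} (h : Deficient n) : n ≠ 0 := by
  rintro rfl
  exact lt_irrefl 0 h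

lemma Deficient.of_dvd {d n : ℕ} (h : Deficient n) (hd : d ∣ n) : Deficient d := by
  have hn := h.ne_zero
  rw [deficient_iff_abundancyIndex_lt_two hn] at h
  rw [deficient_iff_abundancyIndex_lt_two (ne_zero_of_dvd_ne_zero hn hd)]
  exact (Nat.abundancyIndex_le_of_dvd hn hd).trans_lt h

lemma Nat.Coprime.abundancyIndex_mul {a b : ℕ} (h : a.Coprime b) :
    (a * b).abundancyIndex = a.abundancyIndex * b.abundancyIndex := by
  simp only [Nat.abundancyIndex, h.sum_divisors_mul, Nat.cast_mul, mul_div_mul_comm]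

lemma Nat.Prime.abundancyIndex_eq {p : ℕ} (hp : p.Prime) :
    p.abundancyIndex = 1 + 1 / p := by
  have : (p : ℚ) ≠ 0 := by exact_mod_cast hp.ne_zero
  rw [Nat.abundancyIndex, hp.sum_divisors]
  field_simp
  push_cast
  ring

lemma Nat.Prime.abundancyIndex_le {p q : ℕ} (hp : p.Prime) (hq : q.Prime) (hqp : q ≤ p) :
    p.abundancyIndex ≤ q.abundancyIndex := by
  rw [hp.abundancyIndex_eq, hq.abundancyIndex_eq]
  gcongr
  exact_mod_cast hq.pos

lemma Deficient.mul_prime_of_le {e p q : ℕ} (h : Deficient (e * q)) (hp : p.Prime)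
    (hq : q.Prime) (hqp : q ≤ p) (hep : e.Coprime p) (heq : e.Coprime q) :
    Deficient (e * p) := by
  have he : e ≠ 0 := left_ne_zero_of_mul h.ne_zero
  rw [deficient_iff_abundancyIndex_lt_two (mul_ne_zero he hq.ne_zero), heq.abundancyIndex_mul]
    at h
  rw [deficient_iff_abundancyIndex_lt_two (mul_ne_zero he hp.ne_zero), hep.abundancyIndex_mul]
  calc e.abundancyIndex * p.abundancyIndex
      ≤ e.abundancyIndex * q.abundancyIndex := by
        gcongr
        · unfold Nat.abundancyIndex
          positivity
        · exact hp.abundancyIndex_le hq hqp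
    _ < 2 := h

lemma Nat.exists_prime_mul_dvd_of_dvd_of_ne {e m : ℕ} (hm : m ≠ 0) (he : e ∣ m) (hne : e ≠ m) :
    ∃ q, q.Prime ∧ e * q ∣ m := by
  obtain ⟨c, rfl⟩ := he
  have hc : c ≠ 1 := fun h => hne (by rw [h, mul_one])
  exact ⟨c.minFac, Nat.minFac_prime hc, mul_dvd_mul_left e c.minFac_dvd⟩

theorem primitiveAbundant_mul_prime_of_squarefree {m p : ℕ} (hsq : Squarefree m)
    (hdef : Deficient m) (hp : p.Prime) (hlt : ∀ q, q.Prime → q ∣ m → q < p)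
    (hab : Abundant (m * p)) :
    PrimitiveAbundant (m * p) := by
  have hpm : ¬ p ∣ m := fun h => (hlt p hp h).false
  refine ⟨hab, fun d hd => ?_⟩
  obtain ⟨hdvd, hd_lt⟩ := Nat.mem_properDivisors.mp hd
  by_cases hpd : p ∣ d
  · obtain ⟨e, rfl⟩ := hpd
    rw [mul_comm p e] at hdvd hd_lt ⊢
    have hem : e ∣ m := Nat.dvd_of_mul_dvd_mul_right hp.pos hdvd
    have hne : e ≠ m := by
      rintro rfl
      exact lt_irrefl _ hd_lt
    obtain ⟨q, hq, heqm⟩ := Nat.exists_prime_mul_dvd_of_dvd_of_ne hsq.ne_zero hem hne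
    have heq : e.Coprime q := (Nat.squarefree_mul_iff.mp (hsq.squarefree_of_dvd heqm)).1
    have hep : e.Coprime p := ((hp.coprime_iff_not_dvd).mpr fun h => hpm (h.trans hem)).symm
    have hqp : q < p := hlt q hq ((Dvd.intro_left e rfl).trans heqm)
    exact (hdef.of_dvd heqm).mul_prime_of_le hp hq hqp.le hep heq
  · exact hdef.of_dvd (((hp.coprime_iff_not_dvd).mpr hpd).symm.dvd_of_dvd_mul_right hdvd)

/-- If `p₁ < ⋯ < p_k` are primes with `m = p₁⋯p_k` deficient and `p > p_k` is a
prime such that `m·p` is abundant, then `m·p` is primitive abundant. -/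
theorem stmt9 (k : ℕ) (ps : Fin k → ℕ) (hps : ∀ i, (ps i).Prime)
    (hmono : StrictMono ps) (m : ℕ) (hm : m = ∏ i, ps i)
    (hdef : Deficient m) (p : ℕ) (hp : p.Prime) (hgt : ∀ i, ps i < p)
    (hab : Abundant (m * p)) :
    PrimitiveAbundant (m * p) := by
  subst hm
  have hsq : Squarefree (∏ i, ps i) :=
    Finset.squarefree_prod_of_pairwise_isCoprime
      (fun i _ j _ hij => Nat.coprime_iff_isRelPrime.mp
        ((Nat.coprime_primes (hps i) (hps j)).mpr (hmono.injective.ne hij)))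
      (fun i _ => (hps i).squarefree)
  have hlt : ∀ q, q.Prime → q ∣ ∏ i, ps i → q < p := fun q hq hdvd => by
    obtain ⟨i, -, hqi⟩ := hq.prime.exists_mem_finset_dvd hdvd
    exact (Nat.prime_dvd_prime_iff_eq hq (hps i)).mp hqi ▸ hgt i
  exact primitiveAbundant_mul_prime_of_squarefree hsq hdef hp hlt hab
end

section
/- For every natural number m ≥ 1 and every k ≥ 0, the set of natural numbers n such that gcd(m, n) = 1, Ω(n) = k, and m·n is primitive abundant, is finite. -/
/-- `Ω(n)`: the number of prime factors of `n` counted with multiplicity. -/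
def bigOmega (n : ℕ) : ℕ := n.primeFactorsList.length

/-!
If `m * n` is primitive abundant and `n ≠ 1`, then `m` is a deficient proper divisor, so
`2mn < σ(mn) ≤ σ(m) σ(n)` with `σ(m) < 2m`. Every proper divisor of `n` is at most `n / q`,
where `q` is the least prime factor of `n`, and `n` has fewer than `2 ^ Ω(n)` proper divisors;
hence `q σ(n) < n (q + 2 ^ Ω(n))`, and combining the two inequalities gives `q < 2m · 2 ^ Ω(n)`.
Writing `n = q r`, the number `(m q) r` is again primitive abundant with `Ω(r) = Ω(n) - 1`, so
induction on `Ω(n)` (for all `m` at once) leaves only finitely many choices for `q` and `r`.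
-/

open Finset ArithmeticFunction

lemma bigOmega_eq_cardFactors (n : ℕ) : bigOmega n = cardFactors n :=
  cardFactors_apply.symm

lemma sigma1_mul_le (m n : ℕ) : sigma1 (m * n) ≤ sigma1 m * sigma1 n := by
  rw [sigma1, sigma1, sigma1, Nat.divisors_mul, ← image_mul_product, sum_mul_sum,
    ← sum_product']
  exact sum_image_le_of_nonneg fun _ _ => Nat.zero_le _

lemma card_divisors_le_two_pow_bigOmega (n : ℕ) : #n.divisors ≤ 2 ^ bigOmega n := by
  rcases eq_or_ne n 0 with rfl | hn
  · simp
  rw [Nat.card_divisors hn, bigOmega_eq_cardFactors, cardFactors_eq_sum_factorization,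
    Finsupp.sum, Nat.support_factorization, ← prod_pow_eq_pow_sum]
  exact prod_le_prod' fun _ _ => Nat.lt_two_pow_self

lemma card_properDivisors_lt_two_pow_bigOmega (n : ℕ) : #n.properDivisors < 2 ^ bigOmega n := by
  rcases eq_or_ne n 0 with rfl | hn
  · simp
  refine (card_lt_card ?_).trans_le (card_divisors_le_two_pow_bigOmega n)
  rw [← Nat.cons_self_properDivisors hn]
  exact ssubset_cons _

lemma minFac_mul_le_of_mem_properDivisors {n d : ℕ} (hd : d ∈ n.properDivisors) :
    n.minFac * d ≤ n := by
  obtain ⟨⟨e, rfl⟩, hlt⟩ := Nat.mem_properDivisors.1 hd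
  have he : 2 ≤ e := by
    rcases e with _ | _ | e <;> simp_all
  calc (d * e).minFac * d ≤ e * d :=
        Nat.mul_le_mul_right d (Nat.minFac_le_of_dvd he (dvd_mul_left e d))
    _ = d * e := mul_comm e d

lemma minFac_mul_sigma1_le (n : ℕ) :
    n.minFac * sigma1 n ≤ n * (n.minFac + #n.properDivisors) := by
  have hproper : ∑ d ∈ n.properDivisors, n.minFac * d ≤ #n.properDivisors * n := by
    simpa using sum_le_card_nsmul _ _ n fun _ hd => minFac_mul_le_of_mem_properDivisors hd
  rw [sigma1, Nat.sum_divisors_eq_sum_properDivisors_add_self, mul_add, mul_sum]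
  linarith

lemma minFac_lt_of_primitiveAbundant_mul {m n : ℕ} (h : PrimitiveAbundant (m * n)) :
    n.minFac < 2 * m * 2 ^ bigOmega n := by
  have hmn : m * n ≠ 0 := by
    rintro hmn
    simpa [Abundant, hmn, sigma1] using h.1
  have hm : m ≠ 0 := left_ne_zero_of_mul hmn
  rcases eq_or_ne n 1 with rfl | hn1
  · simp only [Nat.minFac_one, bigOmega, Nat.primeFactorsList_one, List.length_nil, pow_zero]
    omega
  have hn : 2 ≤ n := by
    have := right_ne_zero_of_mul hmn
    omega
  have hdef : sigma1 m < 2 * m := h.2 m <| Nat.mem_properDivisors.2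
    ⟨dvd_mul_right m n, lt_mul_of_one_lt_right (Nat.pos_of_ne_zero hm) hn⟩
  set q := n.minFac
  set P := #n.properDivisors
  have hP : P < 2 ^ bigOmega n := card_properDivisors_lt_two_pow_bigOmega n
  have habund : 2 * (m * n) * q < n * (sigma1 m * (q + P)) :=
    calc 2 * (m * n) * q < sigma1 m * sigma1 n * q :=
          Nat.mul_lt_mul_of_pos_right (h.1.trans_le (sigma1_mul_le m n))
            (Nat.minFac_pos n)
      _ = sigma1 m * (q * sigma1 n) := by ring
      _ ≤ sigma1 m * (n * (q + P)) := Nat.mul_le_mul_left _ (minFac_mul_sigma1_le n)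
      _ = n * (sigma1 m * (q + P)) := by ring
  have hcancel : 2 * m * q < sigma1 m * (q + P) :=
    Nat.lt_of_mul_lt_mul_left (a := n) (by linarith)
  have hq : q < sigma1 m * P := by nlinarith
  calc q < sigma1 m * P := hq
    _ ≤ 2 * m * 2 ^ bigOmega n := Nat.mul_le_mul hdef.le hP.le

theorem finite_setOf_bigOmega_eq_and_primitiveAbundant_mul (k m : ℕ) :
    {n | bigOmega n = k ∧ PrimitiveAbundant (m * n)}.Finite := by
  induction k generalizing m with
  | zero =>
    refine (Set.finite_Iic 1).subset fun n ⟨hΩ, _⟩ => ?_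
    rw [bigOmega_eq_cardFactors, cardFactors_eq_zero_iff_eq_zero_or_one] at hΩ
    simp only [Set.mem_Iic]
    omega
  | succ k ih =>
    refine ((Set.finite_Iio (2 * m * 2 ^ (k + 1))).biUnion
      fun q _ => (ih (m * q)).image (q * ·)).subset ?_
    rintro n ⟨hΩ, hpan⟩
    obtain ⟨r, hr⟩ := Nat.minFac_dvd n
    have hn1 : n ≠ 1 := by
      rintro rfl
      simp [bigOmega] at hΩ
    have hr0 : r ≠ 0 := by
      rintro rfl
      rw [mul_zero] at hr
      simp [hr, bigOmega] at hΩ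
    have hΩr : bigOmega r = k := by
      rw [hr, bigOmega_eq_cardFactors, cardFactors_mul (Nat.minFac_prime hn1).ne_zero hr0,
        cardFactors_apply_prime (Nat.minFac_prime hn1), ← bigOmega_eq_cardFactors] at hΩ
      omega
    have hq : n.minFac < 2 * m * 2 ^ (k + 1) := hΩ ▸ minFac_lt_of_primitiveAbundant_mul hpan
    refine Set.mem_biUnion hq ⟨r, ⟨hΩr, ?_⟩, hr.symm⟩
    rwa [mul_assoc, ← hr]

theorem stmt12_general (m k : ℕ) :
    {n : ℕ | Nat.Coprime m n ∧ bigOmega n = k ∧ PrimitiveAbundant (m * n)}.Finite :=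
  (finite_setOf_bigOmega_eq_and_primitiveAbundant_mul k m).subset fun _ hn => hn.2

/-- For every `m ≥ 1` and every `k`, there are only finitely many `n` with
`gcd(m, n) = 1`, `Ω(n) = k` and `m·n` primitive abundant. -/
theorem stmt12 (m k : ℕ) (hm : 1 ≤ m) :
    {n : ℕ | Nat.Coprime m n ∧ bigOmega n = k ∧ PrimitiveAbundant (m * n)}.Finite :=
  stmt12_general m k
end

section
/- A natural number n is primitive weird (i.e., n is weird and no proper divisor of n is weird) if and only if n is weird and primitive abundant. -/
/-- `n` is semiperfect if it is the sum of a set of distinct proper divisors of `n`. -/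
def Semiperfect (n : ℕ) : Prop :=
  ∃ s : Finset ℕ, s ⊆ n.properDivisors ∧ ∑ d ∈ s, d = n

/-- A weird number: abundant but not semiperfect. -/
def Weird (n : ℕ) : Prop := Abundant n ∧ ¬ Semiperfect n

lemma semiperfect_of_dvd {d n : ℕ} (hd : Semiperfect d) (hdvd : d ∣ n)
    (hlt : d < n) : Semiperfect n := by
  obtain ⟨m, rfl⟩ := hdvd
  obtain ⟨s, hs, hsum⟩ := hd
  have hm : 0 < m := by
    rcases Nat.eq_zero_or_pos m with h | h
    · subst h; simp at hlt
    · exact h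
  refine ⟨s.image (m * ·), ?_, ?_⟩
  · intro x hx
    simp only [Finset.mem_image] at hx
    obtain ⟨y, hy, rfl⟩ := hx
    have hy' := Nat.mem_properDivisors.mp (hs hy)
    refine Nat.mem_properDivisors.mpr ⟨?_, ?_⟩
    · rw [mul_comm d m]; exact mul_dvd_mul_left m hy'.1
    · rw [mul_comm d m]; exact (Nat.mul_lt_mul_left hm).mpr hy'.2
  · rw [Finset.sum_image (by intro a _ b _ h; exact Nat.eq_of_mul_eq_mul_left hm h),
      ← Finset.mul_sum, hsum, mul_comm]

lemma semiperfect_of_perfect {d : ℕ} (_hd : 0 < d) (h : sigma1 d = 2 * d) :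
    Semiperfect d := by
  refine ⟨d.properDivisors, le_refl _, ?_⟩
  have := Nat.sum_divisors_eq_sum_properDivisors_add_self (n := d)
  have : sigma1 d = (∑ x ∈ d.properDivisors, x) + d := this
  omega

/-- `n` is primitive weird (weird with no weird proper divisor) iff `n` is weird
and primitive abundant. -/
theorem stmt18 (n : ℕ) (hn : 1 ≤ n) :
    (Weird n ∧ ∀ d ∈ n.properDivisors, ¬ Weird d) ↔
      (Weird n ∧ PrimitiveAbundant n) := by
  constructor
  · rintro ⟨hw, hnd⟩
    refine ⟨hw, hw.1, fun d hd => ?_⟩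
    have hd' := Nat.mem_properDivisors.mp hd
    have hdpos : 0 < d := Nat.pos_of_dvd_of_pos hd'.1 hn
    by_contra hdef
    have hge : 2 * d ≤ sigma1 d := not_lt.mp hdef
    rcases eq_or_lt_of_le hge with heq | habund
    · -- d perfect, hence semiperfect, hence n semiperfect: contradiction
      exact hw.2 (semiperfect_of_dvd (semiperfect_of_perfect hdpos heq.symm) hd'.1 hd'.2)
    · -- d abundant, not weird, so semiperfect
      have : Semiperfect d := by
        by_contra hsp
        exact hnd d hd ⟨habund, hsp⟩
      exact hw.2 (semiperfect_of_dvd this hd'.1 hd'.2)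
  · rintro ⟨hw, ha⟩
    refine ⟨hw, fun d hd hwd => ?_⟩
    have := ha.2 d hd
    exact absurd hwd.1 (not_lt.mpr (le_of_lt this))
end
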